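/- Let m, n ∈ ℕ and let 𝒫' be a finite-dimensional ℝ-linear subspace of the space of polynomial maps ℝ^m → ℝ^n (each coordinate a polynomial function). For i = 1, …, n let π_i(𝒫') := { x ↦ (f(x))_i : f ∈ 𝒫' } be the i-th coordinate projection of 𝒫', and set M₀ := max_{1 ≤ i ≤ n} dim π_i(𝒫'). Let M ≥ M₀ and let w₁, …, w_M > 0 be positive weights. Then for almost every tuple (x₁, …, x_M) ∈ (ℝ^m)^M with respect to Lebesgue measure, the symmetric bilinear form (f, g) ↦ (1/M) Σ_{i=1}^M w_i ⟨f(x_i), g(x_i)⟩ is an inner product (i.e., positive definite) on 𝒫'. -/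

import Mathlib

/-!
For each coordinate `i`, the functions of `π_i(𝒫')` are polynomials on a space of dimension
`d ≤ M`. Fixing a basis, the `d × d` minor `det (b_k (x_j))` of the evaluation matrix is a
polynomial in the sample points which is nonzero at some points, so it is nonzero for almost every
sample; then a function of `π_i(𝒫')` vanishing at all samples is zero. A nonzero `f ∈ 𝒫'` has a
nonzero coordinate, hence a nonzero value at some sample point, and the weighted sum is positive.
-/

open MeasureTheory Module Matrix

/-- The `i`-th coordinate projection on spaces of maps `ℝ^m → ℝ^n`. -/
def coordProj (m n : ℕ) (i : Fin n) :
    ((Fin m → ℝ) → (Fin n → ℝ)) →ₗ[ℝ] ((Fin m → ℝ) → ℝ) :=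
  (LinearMap.proj i : (Fin n → ℝ) →ₗ[ℝ] ℝ).compLeft ((Fin m → ℝ))

theorem Polynomial.ae_eval_ne_zero {p : Polynomial ℝ} (hp : p ≠ 0) :
    ∀ᵐ a : ℝ, p.eval a ≠ 0 := by
  rw [ae_iff]
  simpa using (Polynomial.finite_setOfPred_isRoot hp).measure_zero volume

namespace MvPolynomial

/-- Fubini over the first variable: for almost every value of the remaining variables the
leading coefficient in the first one does not vanish, and then the resulting one-variable
polynomial has only finitely many roots. -/
theorem ae_eval_ne_zero_fin :
    ∀ {N : ℕ} {p : MvPolynomial (Fin N) ℝ}, p ≠ 0 → ∀ᵐ x : Fin N → ℝ, eval x p ≠ 0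
  | 0, p, hp => by
    obtain ⟨c, rfl⟩ := C_surjective (Fin 0) p
    exact ae_of_all _ fun x => by simpa using hp
  | N + 1, p, hp => by
    set q := finSuccEquiv ℝ N p
    have hq : q ≠ 0 := by simpa [q] using hp
    have hfiber : ∀ᵐ y : Fin N → ℝ, ∀ᵐ a : ℝ, eval (Fin.cons a y) p ≠ 0 := by
      filter_upwards [ae_eval_ne_zero_fin (Polynomial.leadingCoeff_ne_zero.2 hq)] with y hy
      have hqy : q.map (eval y) ≠ 0 := fun h => hy <| by
        simpa [Polynomial.coeff_map] using congrArg (Polynomial.coeff · q.natDegree) h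
      simpa only [eval_eq_eval_mv_eval'] using Polynomial.ae_eval_ne_zero hqy
    have hmeas : MeasurableSet {z : ℝ × (Fin N → ℝ) | eval (Fin.cons z.1 z.2) p ≠ 0} :=
      (measurableSet_singleton 0).compl.preimage
        ((continuous_eval p).measurable.comp (by fun_prop))
    have hprod : ∀ᵐ z : ℝ × (Fin N → ℝ), eval (Fin.cons z.1 z.2) p ≠ 0 := by
      rw [Measure.volume_eq_prod, Measure.ae_prod_iff_ae_ae hmeas]
      exact (Measure.ae_ae_comm hmeas).2 hfiber
    simpa using (volume_preserving_piFinSuccAbove (fun _ : Fin (N + 1) => ℝ) 0)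
      |>.quasiMeasurePreserving.ae hprod

theorem ae_eval_ne_zero {σ : Type*} [Fintype σ] {p : MvPolynomial σ ℝ} (hp : p ≠ 0) :
    ∀ᵐ x : σ → ℝ, eval x p ≠ 0 := by
  let e := Fintype.equivFin σ
  have hp' : rename e p ≠ 0 := by simpa using (rename_injective _ e.injective).ne hp
  filter_upwards [(volume_measurePreserving_piCongrLeft (fun _ => ℝ) e).quasiMeasurePreserving.ae
    (ae_eval_ne_zero_fin hp')] with x hx
  simpa [eval_rename, Function.comp_def, MeasurableEquiv.piCongrLeft_apply_apply] using hx

end MvPolynomial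

theorem volume_measurePreserving_curry_symm (ι κ X : Type*) [Fintype ι] [Fintype κ]
    [MeasureSpace X] [SigmaFinite (volume : Measure X)] :
    MeasurePreserving (MeasurableEquiv.curry ι κ X).symm := by
  refine ⟨(MeasurableEquiv.curry ι κ X).symm.measurable, (Measure.pi_eq fun s _ => ?_).symm⟩
  have hpre : (MeasurableEquiv.curry ι κ X).symm ⁻¹' Set.univ.pi s =
      Set.univ.pi fun i => Set.univ.pi fun j => s (i, j) := by
    ext x
    simp [MeasurableEquiv.coe_curry_symm]
  rw [MeasurableEquiv.map_apply, hpre, volume_pi_pi]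
  simp_rw [volume_pi_pi]
  exact (Fintype.prod_prod_type fun p => volume (s p)).symm

section DeterminingFamily

variable {X K : Type*} [Field K]

def IsDeterminingFamily {ι : Type*} (Q : Submodule K (X → K)) (x : ι → X) : Prop :=
  ∀ q ∈ Q, (∀ j, q (x j) = 0) → q = 0

theorem IsDeterminingFamily.of_comp {ι κ : Type*} {Q : Submodule K (X → K)} {x : ι → X}
    {e : κ → ι} (h : IsDeterminingFamily Q (x ∘ e)) : IsDeterminingFamily Q x :=
  fun q hq hvan => h q hq fun j => hvan (e j)

/-- The evaluation functionals span `Dual K Q`, since no nonzero `q ∈ Q` is killed by all of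
them; the points of a basis extracted from them form the family. -/
theorem exists_isDeterminingFamily (Q : Submodule K (X → K)) [FiniteDimensional K Q] :
    ∃ x : Fin (finrank K Q) → X, IsDeterminingFamily Q x := by
  let ev : X → Dual K Q := fun x => (LinearMap.proj x).comp Q.subtype
  have hspan : Submodule.span K (Set.range ev) = ⊤ := by
    have hbot : (Submodule.span K (Set.range ev)).dualCoannihilator = ⊥ := by
      refine (Submodule.eq_bot_iff _).2 fun q hq => Subtype.ext <| funext fun x => ?_
      exact (Submodule.mem_dualCoannihilator q).1 hq _ (Submodule.subset_span ⟨x, rfl⟩)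
    have := Subspace.finrank_add_finrank_dualCoannihilator_eq (Submodule.span K (Set.range ev))
    rw [hbot, finrank_bot, add_zero, ← Subspace.dual_finrank_eq] at this
    exact Submodule.eq_top_of_finrank_eq this
  obtain ⟨κ, a, -, hsp, hli⟩ := exists_linearIndependent' K ev
  let B : Basis κ K (Dual K Q) := Basis.mk hli (by rw [hsp, hspan])
  have : Finite κ := Module.Finite.finite_basis B
  have hcard : Nat.card κ = finrank K Q := by
    rw [← finrank_eq_nat_card_basis B, Subspace.dual_finrank_eq]
  refine ⟨a ∘ (Finite.equivFin κ).symm ∘ Fin.cast hcard.symm, fun q hq hvan => ?_⟩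
  have hker : ∀ k, Dual.eval K Q ⟨q, hq⟩ (ev (a k)) = 0 := fun k => by
    simpa [ev] using hvan (Fin.cast hcard (Finite.equivFin κ k))
  have := B.ext (f₁ := Dual.eval K Q ⟨q, hq⟩) (f₂ := 0) (by simpa [B] using hker)
  simpa using (forall_dual_apply_eq_zero_iff K (⟨q, hq⟩ : Q)).1 (LinearMap.ext_iff.1 this)

theorem isDeterminingFamily_iff_det_ne_zero {Q : Submodule K (X → K)} {d : ℕ}
    (b : Basis (Fin d) K Q) (x : Fin d → X) :
    IsDeterminingFamily Q x ↔ (Matrix.of fun k j => (b k : X → K) (x j)).det ≠ 0 := by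
  have hvecMul : ∀ c, c ᵥ* Matrix.of (fun k j => (b k : X → K) (x j)) =
      fun j => (b.equivFun.symm c : X → K) (x j) := fun c => by
    ext j
    simp [Matrix.vecMul, dotProduct, Basis.equivFun_symm_apply, Finset.sum_apply]
  rw [Ne, ← exists_vecMul_eq_zero_iff, not_exists]
  simp only [hvecMul, not_and, funext_iff, Pi.zero_apply]
  constructor
  · intro h c hc hvan
    refine hc (b.equivFun.symm.injective (Subtype.ext ?_))
    simpa using h _ (SetLike.coe_mem _) hvan
  · intro h q hq hvan
    by_contra hq0
    refine h (b.equivFun ⟨q, hq⟩) (by simpa [Subtype.ext_iff] using hq0) ?_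
    simpa using hvan

end DeterminingFamily

theorem ae_isDeterminingFamily {σ ι : Type*} [Fintype σ] [Fintype ι]
    (Q : Submodule ℝ ((σ → ℝ) → ℝ)) [FiniteDimensional ℝ Q]
    (hQ : ∀ q ∈ Q, ∃ p : MvPolynomial σ ℝ, ∀ y, q y = MvPolynomial.eval y p)
    (hcard : finrank ℝ Q ≤ Fintype.card ι) :
    ∀ᵐ x : ι → σ → ℝ, IsDeterminingFamily Q x := by
  let b := Module.finBasis ℝ Q
  choose p hp using fun k => hQ _ (b k).2
  obtain ⟨e⟩ : Nonempty (Fin (finrank ℝ Q) ↪ ι) :=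
    Function.Embedding.nonempty_of_card_le (by simpa using hcard)
  let D : MvPolynomial (ι × σ) ℝ :=
    (Matrix.of fun k j => MvPolynomial.rename (fun t => (e j, t)) (p k)).det
  have hD : ∀ x : ι → σ → ℝ, MvPolynomial.eval (Function.uncurry x) D =
      (Matrix.of fun k j => (b k : (σ → ℝ) → ℝ) (x (e j))).det := fun x => by
    simp only [D, RingHom.map_det]
    congr 1
    ext k j
    simp [MvPolynomial.eval_rename, hp, Function.comp_def]
  obtain ⟨y, hy⟩ := exists_isDeterminingFamily Q
  have hD0 : D ≠ 0 := by
    intro h0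
    have := hD (Function.extend e y 0)
    simp only [h0, map_zero, e.injective.extend_apply] at this
    exact (isDeterminingFamily_iff_det_ne_zero b y).1 hy this.symm
  filter_upwards [(volume_measurePreserving_curry_symm ι σ ℝ).quasiMeasurePreserving.ae
    (MvPolynomial.ae_eval_ne_zero hD0)] with x hx
  refine IsDeterminingFamily.of_comp (e := e) ((isDeterminingFamily_iff_det_ne_zero b _).2 ?_)
  rwa [MeasurableEquiv.coe_curry_symm, hD] at hx

theorem sum_mul_sum_mul_self_pos {ι κ : Type*} [Fintype ι] [Fintype κ] {w : ι → ℝ}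
    (hw : ∀ i, 0 < w i) {y : ι → κ → ℝ} (hy : y ≠ 0) :
    0 < ∑ i, w i * ∑ j, y i j * y i j := by
  obtain ⟨i, hi⟩ := Function.ne_iff.1 hy
  obtain ⟨j, hj⟩ := Function.ne_iff.1 hi
  have hsq : ∀ i, 0 ≤ ∑ j, y i j * y i j := fun i =>
    Finset.sum_nonneg fun j _ => mul_self_nonneg _
  refine Finset.sum_pos' (fun i _ => mul_nonneg (hw i).le (hsq i)) ⟨i, Finset.mem_univ _, ?_⟩
  exact mul_pos (hw i) (Finset.sum_pos' (fun j _ => mul_self_nonneg _)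
    ⟨j, Finset.mem_univ _, mul_self_pos.2 hj⟩)

/-- Let `𝒫'` be a finite-dimensional subspace of polynomial maps
`ℝ^m → ℝ^n`, `M₀ = max_i dim π_i(𝒫')`, `M ≥ M₀`, and `w₁, …, w_M > 0`.  Then for almost
every tuple of sample points `(x₁, …, x_M)`, the bilinear form
`(f,g) ↦ (1/M) Σ_i w_i ⟨f(x_i), g(x_i)⟩` is positive definite on `𝒫'`. -/
theorem stmt9 (m n : ℕ) (P : Submodule ℝ ((Fin m → ℝ) → (Fin n → ℝ)))
    (hpoly : ∀ f ∈ P, ∀ i : Fin n, ∃ q : MvPolynomial (Fin m) ℝ,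
      ∀ x : Fin m → ℝ, f x i = MvPolynomial.eval x q)
    [FiniteDimensional ℝ P]
    (M : ℕ) (hM : ∀ i : Fin n, Module.finrank ℝ (P.map (coordProj m n i)) ≤ M)
    (w : Fin M → ℝ) (hw : ∀ i, 0 < w i) :
    ∀ᵐ x ∂(volume : Measure (Fin M → Fin m → ℝ)),
      ∀ f ∈ P, f ≠ 0 →
        0 < (∑ i : Fin M, w i * ∑ j : Fin n, f (x i) j * f (x i) j) / M := by
  have hdet : ∀ᵐ x : Fin M → Fin m → ℝ, ∀ i, IsDeterminingFamily (P.map (coordProj m n i)) x :=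
    ae_all_iff.2 fun i => ae_isDeterminingFamily _
      (by rintro _ ⟨f, hf, rfl⟩; exact hpoly f hf i) (by simpa using hM i)
  filter_upwards [hdet] with x hx f hf hf0
  have hsamples : (fun k j => f (x k) j) ≠ 0 := by
    contrapose! hf0
    funext y i
    exact congrFun (hx i _ (Submodule.mem_map_of_mem hf) fun k => congrFun (congrFun hf0 k) i) y
  obtain ⟨k, -⟩ := Function.ne_iff.1 hsamples
  exact div_pos (sum_mul_sum_mul_self_pos hw hsamples) (Nat.cast_pos.2 k.pos)
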